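/- arXiv:1908.04821 — 2 statements merged into one kernel-verified Lean document; each statement's English description precedes it below -/
import Mathlib

section
/- Let Λ̄, T̄₁, T̄₂ : U → M_{n×n}(ℝ) be smooth maps on an open set U ⊆ ℝ², let Z := {p ∈ U : det Λ̄(p) = 0} have empty interior, and let Γ̄₁, Γ̄₂ : U ∖ Z → M_{n×n}(ℝ) be smooth maps satisfying Γ̄₁·Λ̄ − ∂_u Λ̄ = Λ̄·T̄₁ and Γ̄₂·Λ̄ − ∂_v Λ̄ = Λ̄·T̄₂ on U ∖ Z. Then ∂_v Γ̄₁ − ∂_u Γ̄₂ + [Γ̄₁, Γ̄₂] = 0 on U ∖ Z if and only if ∂_v T̄₁ − ∂_u T̄₂ + [T̄₁, T̄₂] = 0 on all of U, where [A,B] := AB − BA. -/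
open Matrix Filter

noncomputable section

abbrev Pt : Type := ℝ × ℝ
abbrev Vec3 : Type := Fin 3 → ℝ

/-- direction vector for the `j`-th partial derivative -/
def pdir (j : Fin 2) : Pt := if j = 0 then ((1 : ℝ), (0 : ℝ)) else ((0 : ℝ), (1 : ℝ))

/-- partial derivative in coordinate direction `j` -/
def pd {E : Type*} [NormedAddCommGroup E] [NormedSpace ℝ E]
    (j : Fin 2) (f : Pt → E) (p : Pt) : E :=
  fderiv ℝ f p (pdir j)

/-- Jacobian matrix of a map into `Fin n → ℝ` -/
def Jac {n : ℕ} (f : Pt → (Fin n → ℝ)) (p : Pt) : Matrix (Fin n) (Fin 2) ℝ :=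
  Matrix.of fun i j => pd j (fun q => f q i) p

/-- entrywise partial derivative of a matrix valued map -/
def pdM {m n : ℕ} (j : Fin 2) (A : Pt → Matrix (Fin m) (Fin n) ℝ) (p : Pt) :
    Matrix (Fin m) (Fin n) ℝ :=
  Matrix.of fun i k => pd j (fun q => A q i k) p

/-- entrywise smoothness of a matrix valued map on a set -/
def SmoothMatOn {m n : ℕ} (U : Set Pt) (A : Pt → Matrix (Fin m) (Fin n) ℝ) : Prop :=
  ∀ i k, ContDiffOn ℝ (⊤ : ℕ∞) (fun p => A p i k) U

/-- `x` is a frontal on `U` -/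
def IsFrontalOn (U : Set Pt) (x : Pt → Vec3) : Prop :=
  ContDiffOn ℝ (⊤ : ℕ∞) x U ∧
  ∀ p ∈ U, ∃ V : Set Pt, V ⊆ U ∧ IsOpen V ∧ p ∈ V ∧
    ∃ ν : Pt → Vec3, ContDiffOn ℝ (⊤ : ℕ∞) ν V ∧
      ∀ q ∈ V, ν q ⬝ᵥ ν q = 1 ∧ ∀ j : Fin 2, ν q ⬝ᵥ (Jac x q)ᵀ j = 0

/-- `x` is a (wave) front on `U` -/
def IsFrontOn (U : Set Pt) (x : Pt → Vec3) : Prop :=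
  ContDiffOn ℝ (⊤ : ℕ∞) x U ∧
  ∀ p ∈ U, ∃ V : Set Pt, V ⊆ U ∧ IsOpen V ∧ p ∈ V ∧
    ∃ ν : Pt → Vec3, ContDiffOn ℝ (⊤ : ℕ∞) ν V ∧
      ∀ q ∈ V, ν q ⬝ᵥ ν q = 1 ∧ (∀ j : Fin 2, ν q ⬝ᵥ (Jac x q)ᵀ j = 0) ∧
        (Matrix.fromRows (Jac x q) (Jac ν q)).rank = 2

/-- `Ω` is a tangent moving base of `x` on `U` -/
def IsTMBOn (U : Set Pt) (x : Pt → Vec3) (Ω : Pt → Matrix (Fin 3) (Fin 2) ℝ) : Prop :=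
  SmoothMatOn U Ω ∧
  ∀ p ∈ U, LinearIndependent ℝ (fun j : Fin 2 => (Ω p)ᵀ j) ∧
    ∀ j : Fin 2, (Jac x p)ᵀ j ∈ Submodule.span ℝ (Set.range fun k : Fin 2 => (Ω p)ᵀ k)

/-- unit normal induced by a moving base -/
def nor (Ω : Pt → Matrix (Fin 3) (Fin 2) ℝ) (p : Pt) : Vec3 :=
  (Real.sqrt ((crossProduct ((Ω p)ᵀ 0) ((Ω p)ᵀ 1)) ⬝ᵥ (crossProduct ((Ω p)ᵀ 0) ((Ω p)ᵀ 1))))⁻¹ •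
    crossProduct ((Ω p)ᵀ 0) ((Ω p)ᵀ 1)

def IOm (Ω : Pt → Matrix (Fin 3) (Fin 2) ℝ) (p : Pt) : Matrix (Fin 2) (Fin 2) ℝ :=
  (Ω p)ᵀ * Ω p

def IIOm (Ω : Pt → Matrix (Fin 3) (Fin 2) ℝ) (p : Pt) : Matrix (Fin 2) (Fin 2) ℝ :=
  -((Ω p)ᵀ * Jac (nor Ω) p)

def Lam (x : Pt → Vec3) (Ω : Pt → Matrix (Fin 3) (Fin 2) ℝ) (p : Pt) :
    Matrix (Fin 2) (Fin 2) ℝ :=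
  (Jac x p)ᵀ * Ω p * (IOm Ω p)⁻¹

def lamOm (x : Pt → Vec3) (Ω : Pt → Matrix (Fin 3) (Fin 2) ℝ) (p : Pt) : ℝ :=
  (Lam x Ω p).det

def muM (Ω : Pt → Matrix (Fin 3) (Fin 2) ℝ) (p : Pt) : Matrix (Fin 2) (Fin 2) ℝ :=
  -((IIOm Ω p)ᵀ * (IOm Ω p)⁻¹)

/-- the Ω-relative curvature -/
def KOm (Ω : Pt → Matrix (Fin 3) (Fin 2) ℝ) (p : Pt) : ℝ := (muM Ω p).det

/-- the Ω-relative mean curvature -/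
def HOm (x : Pt → Vec3) (Ω : Pt → Matrix (Fin 3) (Fin 2) ℝ) (p : Pt) : ℝ :=
  -(1 / 2) * (muM Ω p * (Lam x Ω p).adjugate).trace

/-- singular set of `x` in `U` -/
def Sing (U : Set Pt) (x : Pt → Vec3) : Set Pt :=
  {p ∈ U | (Jac x p).rank < 2}

/-- first Christoffel matrix built from `E, F, G` -/
def Gam1 (E F G : Pt → ℝ) (p : Pt) : Matrix (Fin 2) (Fin 2) ℝ :=
  !![(1 / 2) * pd 0 E p, pd 0 F p - (1 / 2) * pd 1 E p;
     (1 / 2) * pd 1 E p, (1 / 2) * pd 0 G p] * (!![E p, F p; F p, G p])⁻¹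

/-- second Christoffel matrix built from `E, F, G` -/
def Gam2 (E F G : Pt → ℝ) (p : Pt) : Matrix (Fin 2) (Fin 2) ℝ :=
  !![(1 / 2) * pd 1 E p, (1 / 2) * pd 0 G p;
     pd 1 F p - (1 / 2) * pd 0 G p, (1 / 2) * pd 1 G p] * (!![E p, F p; F p, G p])⁻¹

/-- the unit normal `(-g₁, -g₂, 1)/√(1+g₁²+g₂²)` -/
def gnormal (g₁ g₂ : Pt → ℝ) (q : Pt) : Vec3 :=
  (Real.sqrt (1 + g₁ q ^ 2 + g₂ q ^ 2))⁻¹ • ![-(g₁ q), -(g₂ q), 1]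

/-- Weingarten matrix `α = -IIᵀ I⁻¹` of a frontal -/
def alphaM (x : Pt → Vec3) (Ω : Pt → Matrix (Fin 3) (Fin 2) ℝ) (p : Pt) :
    Matrix (Fin 2) (Fin 2) ℝ :=
  -((-((Jac x p)ᵀ * Jac (nor Ω) p))ᵀ * ((Jac x p)ᵀ * Jac x p)⁻¹)

/-- Gaussian curvature -/
def Kgauss (x : Pt → Vec3) (Ω : Pt → Matrix (Fin 3) (Fin 2) ℝ) (p : Pt) : ℝ :=
  (alphaM x Ω p).det

/-- mean curvature -/
def Hmean (x : Pt → Vec3) (Ω : Pt → Matrix (Fin 3) (Fin 2) ℝ) (p : Pt) : ℝ :=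
  -(1 / 2) * (alphaM x Ω p).trace


section Helpers

open scoped Topology

@[simp] lemma pdM_apply {m k : ℕ} (j : Fin 2) (A : Pt → Matrix (Fin m) (Fin k) ℝ) (p : Pt)
    (i : Fin m) (l : Fin k) : pdM j A p i l = pd j (fun q => A q i l) p := rfl

lemma pd_congr {f g : Pt → ℝ} {p : Pt} (h : f =ᶠ[𝓝 p] g) (j : Fin 2) :
    pd j f p = pd j g p := by
  unfold pd; rw [h.fderiv_eq]

lemma pdM_congr {m k : ℕ} {A B : Pt → Matrix (Fin m) (Fin k) ℝ} {p : Pt}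
    (h : ∀ᶠ q in 𝓝 p, A q = B q) (j : Fin 2) : pdM j A p = pdM j B p := by
  ext i l
  exact pd_congr (h.mono fun q hq => by rw [hq]) j

lemma pd_sub {f g : Pt → ℝ} {p : Pt} (hf : DifferentiableAt ℝ f p)
    (hg : DifferentiableAt ℝ g p) (j : Fin 2) :
    pd j (fun q => f q - g q) p = pd j f p - pd j g p := by
  unfold pd; rw [fderiv_fun_sub hf hg]; rfl

lemma pdM_sub {m k : ℕ} {A B : Pt → Matrix (Fin m) (Fin k) ℝ} {p : Pt}
    (hA : ∀ i l, DifferentiableAt ℝ (fun q => A q i l) p)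
    (hB : ∀ i l, DifferentiableAt ℝ (fun q => B q i l) p) (j : Fin 2) :
    pdM j (fun q => A q - B q) p = pdM j A p - pdM j B p := by
  ext i l
  simp only [pdM_apply, Matrix.sub_apply]
  exact pd_sub (hA i l) (hB i l) j

lemma pdM_mul {N : ℕ} {A B : Pt → Matrix (Fin N) (Fin N) ℝ} {p : Pt}
    (hA : ∀ i l, DifferentiableAt ℝ (fun q => A q i l) p)
    (hB : ∀ i l, DifferentiableAt ℝ (fun q => B q i l) p) (j : Fin 2) :
    pdM j (fun q => A q * B q) p = pdM j A p * B p + A p * pdM j B p := by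
  ext i l
  simp only [pdM_apply, Matrix.add_apply, Matrix.mul_apply]
  unfold pd
  rw [fderiv_fun_sum fun x _ => (hA i x).fun_mul (hB x l), ContinuousLinearMap.sum_apply,
    ← Finset.sum_add_distrib]
  refine Finset.sum_congr rfl fun x _ => ?_
  rw [fderiv_fun_mul (hA i x) (hB x l)]
  simp only [ContinuousLinearMap.add_apply, ContinuousLinearMap.smul_apply, smul_eq_mul]
  ring

lemma diffAt_matrix_mul {N : ℕ} {A B : Pt → Matrix (Fin N) (Fin N) ℝ} {p : Pt}
    (hA : ∀ i l, DifferentiableAt ℝ (fun q => A q i l) p)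
    (hB : ∀ i l, DifferentiableAt ℝ (fun q => B q i l) p) :
    ∀ i l, DifferentiableAt ℝ (fun q => (A q * B q) i l) p := by
  intro i l
  have hfun : (fun q => (A q * B q) i l) = fun q => ∑ x : Fin N, A q i x * B q x l := by
    funext q; simp [Matrix.mul_apply]
  rw [hfun]
  exact DifferentiableAt.fun_sum fun x _ => (hA i x).mul (hB x l)

lemma contDiffOn_pd {f : Pt → ℝ} {V : Set Pt} (hV : IsOpen V)
    (hf : ContDiffOn ℝ (⊤ : ℕ∞) f V) (j : Fin 2) : ContDiffOn ℝ (⊤ : ℕ∞) (pd j f) V := by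
  have h1 : ContDiffOn ℝ (⊤ : ℕ∞) (fderiv ℝ f) V :=
    ((contDiffOn_infty_iff_fderiv_of_isOpen hV).1 (hf.of_le (by simp))).2
  exact h1.clm_apply contDiffOn_const

lemma pd_comm {f : Pt → ℝ} {V : Set Pt} (hV : IsOpen V)
    (hf : ContDiffOn ℝ (⊤ : ℕ∞) f V) {p : Pt} (hp : p ∈ V) :
    pd 1 (pd 0 f) p = pd 0 (pd 1 f) p := by
  have hf' : DifferentiableAt ℝ (fderiv ℝ f) p := by
    have h1 : ContDiffOn ℝ (⊤ : ℕ∞) (fderiv ℝ f) V :=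
      ((contDiffOn_infty_iff_fderiv_of_isOpen hV).1 (hf.of_le (by simp))).2
    exact ((h1.differentiableOn (by simp)) p hp).differentiableAt (hV.mem_nhds hp)
  have key : ∀ v w : Pt, fderiv ℝ (fun q => fderiv ℝ f q v) p w
      = fderiv ℝ (fderiv ℝ f) p w v := by
    intro v w
    rw [fderiv_clm_apply hf' (differentiableAt_const v)]
    simp
  have hsymm : IsSymmSndFDerivAt ℝ f p :=
    (hf.contDiffAt (hV.mem_nhds hp)).isSymmSndFDerivAt (by rw [minSmoothness_of_isRCLikeNormedField]; exact WithTop.coe_le_coe.2 le_top)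
  show fderiv ℝ (fun q => fderiv ℝ f q (pdir 0)) p (pdir 1)
      = fderiv ℝ (fun q => fderiv ℝ f q (pdir 1)) p (pdir 0)
  rw [key, key]
  exact hsymm (pdir 1) (pdir 0)

lemma contOn_mul_entry {N : ℕ} {A B : Pt → Matrix (Fin N) (Fin N) ℝ} {V : Set Pt}
    (hA : SmoothMatOn V A) (hB : SmoothMatOn V B) (i k : Fin N) :
    ContinuousOn (fun q => (A q * B q) i k) V := by
  have hfun : (fun q => (A q * B q) i k) = fun q => ∑ x : Fin N, A q i x * B q x k := by
    funext q; simp [Matrix.mul_apply]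
  rw [hfun]
  exact continuousOn_finset_sum _ fun x _ =>
    ((hA i x).continuousOn.mul (hB x k).continuousOn)

end Helpers

open scoped Topology in
/-- equivalence of the compatibility conditions for `Γ̄ᵢ` and `T̄ᵢ`. -/
theorem gamma_compat_iff_T_compat
    (n : ℕ) (U : Set Pt) (hU : IsOpen U)
    (Λb T₁ T₂ : Pt → Matrix (Fin n) (Fin n) ℝ)
    (hΛ : SmoothMatOn U Λb) (hT1 : SmoothMatOn U T₁) (hT2 : SmoothMatOn U T₂)
    (hint : interior {p ∈ U | (Λb p).det = 0} = ∅)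
    (Γ₁ Γ₂ : Pt → Matrix (Fin n) (Fin n) ℝ)
    (hΓ1 : SmoothMatOn (U \ {p | (Λb p).det = 0}) Γ₁)
    (hΓ2 : SmoothMatOn (U \ {p | (Λb p).det = 0}) Γ₂)
    (hrel1 : ∀ p ∈ U \ {p | (Λb p).det = 0}, Γ₁ p * Λb p - pdM 0 Λb p = Λb p * T₁ p)
    (hrel2 : ∀ p ∈ U \ {p | (Λb p).det = 0}, Γ₂ p * Λb p - pdM 1 Λb p = Λb p * T₂ p) :
    (∀ p ∈ U \ {p | (Λb p).det = 0},
      pdM 1 Γ₁ p - pdM 0 Γ₂ p + (Γ₁ p * Γ₂ p - Γ₂ p * Γ₁ p) = 0)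
    ↔ (∀ p ∈ U,
      pdM 1 T₁ p - pdM 0 T₂ p + (T₁ p * T₂ p - T₂ p * T₁ p) = 0) := by
  classical
  set Z : Set Pt := {p | (Λb p).det = 0} with hZdef
  set W : Set Pt := U \ Z with hWdef
  have hWU : W ⊆ U := Set.diff_subset
  -- W is open
  have hWopen : IsOpen W := by
    rw [isOpen_iff_mem_nhds]
    intro p hp
    have hΛc : ContinuousAt Λb p := by
      apply continuousAt_pi.2; intro i; apply continuousAt_pi.2; intro k
      exact ((hΛ i k).contDiffAt (hU.mem_nhds hp.1)).continuousAt
    have hdetc : ContinuousAt (fun q => (Λb q).det) p :=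
      (Continuous.matrix_det continuous_id).continuousAt.comp hΛc
    have h1 : {q : Pt | (Λb q).det ≠ 0} ∈ 𝓝 p :=
      hdetc.preimage_mem_nhds (isOpen_compl_singleton.mem_nhds hp.2)
    filter_upwards [Filter.inter_mem (hU.mem_nhds hp.1) h1] with q hq
    exact ⟨hq.1, hq.2⟩
  -- W is dense in U
  have hdense : U ⊆ closure W := by
    intro p hp
    by_contra hpc
    have hopen : IsOpen (U ∩ (closure W)ᶜ) := hU.inter isClosed_closure.isOpen_compl
    have hsub : U ∩ (closure W)ᶜ ⊆ {q ∈ U | (Λb q).det = 0} := by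
      rintro q ⟨hqU, hqc⟩
      refine ⟨hqU, ?_⟩
      by_contra hdet
      exact hqc (subset_closure ⟨hqU, hdet⟩)
    have hmem : p ∈ interior {q ∈ U | (Λb q).det = 0} :=
      interior_maximal hsub hopen ⟨hp, hpc⟩
    rw [hint] at hmem
    exact hmem
  -- the key pointwise identity on W
  have key : ∀ p ∈ W,
      (pdM 1 Γ₁ p - pdM 0 Γ₂ p + (Γ₁ p * Γ₂ p - Γ₂ p * Γ₁ p)) * Λb p
        = Λb p * (pdM 1 T₁ p - pdM 0 T₂ p + (T₁ p * T₂ p - T₂ p * T₁ p)) := by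
    intro p hp
    have hpU : p ∈ U := hp.1
    have hnU : U ∈ 𝓝 p := hU.mem_nhds hpU
    have hnW : W ∈ 𝓝 p := hWopen.mem_nhds hp
    have dΛ : ∀ i l, DifferentiableAt ℝ (fun q => Λb q i l) p := fun i l =>
      ((hΛ i l).contDiffAt hnU).differentiableAt (by simp)
    have dT1 : ∀ i l, DifferentiableAt ℝ (fun q => T₁ q i l) p := fun i l =>
      ((hT1 i l).contDiffAt hnU).differentiableAt (by simp)
    have dT2 : ∀ i l, DifferentiableAt ℝ (fun q => T₂ q i l) p := fun i l =>
      ((hT2 i l).contDiffAt hnU).differentiableAt (by simp)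
    have dΓ1 : ∀ i l, DifferentiableAt ℝ (fun q => Γ₁ q i l) p := fun i l =>
      ((hΓ1 i l).contDiffAt hnW).differentiableAt (by simp)
    have dΓ2 : ∀ i l, DifferentiableAt ℝ (fun q => Γ₂ q i l) p := fun i l =>
      ((hΓ2 i l).contDiffAt hnW).differentiableAt (by simp)
    have dΛu : ∀ j : Fin 2, ∀ i l, DifferentiableAt ℝ (fun q => pdM j Λb q i l) p := by
      intro j i l
      have h1 : ContDiffOn ℝ (⊤ : ℕ∞) (pd j (fun q => Λb q i l)) U :=
        contDiffOn_pd hU (hΛ i l) j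
      exact ((h1.differentiableOn (by simp)) p hpU).differentiableAt hnU
    -- differentiate the first relation in direction 1
    have E1 : pdM 1 Γ₁ p * Λb p + Γ₁ p * pdM 1 Λb p - pdM 1 (pdM 0 Λb) p
        = pdM 1 Λb p * T₁ p + Λb p * pdM 1 T₁ p := by
      have hev : ∀ᶠ q in 𝓝 p, (fun q => Γ₁ q * Λb q - pdM 0 Λb q) q
          = (fun q => Λb q * T₁ q) q :=
        Filter.eventually_of_mem hnW fun q hq => hrel1 q hq
      have h := pdM_congr hev 1
      rw [pdM_sub (diffAt_matrix_mul dΓ1 dΛ) (dΛu 0) 1, pdM_mul dΓ1 dΛ 1,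
        pdM_mul dΛ dT1 1] at h
      exact h
    -- differentiate the second relation in direction 0
    have E2 : pdM 0 Γ₂ p * Λb p + Γ₂ p * pdM 0 Λb p - pdM 0 (pdM 1 Λb) p
        = pdM 0 Λb p * T₂ p + Λb p * pdM 0 T₂ p := by
      have hev : ∀ᶠ q in 𝓝 p, (fun q => Γ₂ q * Λb q - pdM 1 Λb q) q
          = (fun q => Λb q * T₂ q) q :=
        Filter.eventually_of_mem hnW fun q hq => hrel2 q hq
      have h := pdM_congr hev 0
      rw [pdM_sub (diffAt_matrix_mul dΓ2 dΛ) (dΛu 1) 0, pdM_mul dΓ2 dΛ 0,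
        pdM_mul dΛ dT2 0] at h
      exact h
    -- Clairaut
    have hcl : pdM 1 (pdM 0 Λb) p = pdM 0 (pdM 1 Λb) p := by
      ext i l
      simp only [pdM_apply]
      exact pd_comm hU (hΛ i l) hpU
    rw [hcl] at E1
    -- the algebraic relations from the structure equations
    have hu : pdM 0 Λb p = Γ₁ p * Λb p - Λb p * T₁ p := by
      rw [← hrel1 p hp]; abel
    have hv : pdM 1 Λb p = Γ₂ p * Λb p - Λb p * T₂ p := by
      rw [← hrel2 p hp]; abel
    have h3 : pdM 1 Γ₁ p * Λb p - pdM 0 Γ₂ p * Λb p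
        = (pdM 1 Λb p * T₁ p + Λb p * pdM 1 T₁ p)
          - (pdM 0 Λb p * T₂ p + Λb p * pdM 0 T₂ p)
          - Γ₁ p * pdM 1 Λb p + Γ₂ p * pdM 0 Λb p := by
      rw [← E1, ← E2]; abel
    rw [hu, hv] at h3
    calc (pdM 1 Γ₁ p - pdM 0 Γ₂ p + (Γ₁ p * Γ₂ p - Γ₂ p * Γ₁ p)) * Λb p
        = (pdM 1 Γ₁ p * Λb p - pdM 0 Γ₂ p * Λb p)
            + (Γ₁ p * Γ₂ p - Γ₂ p * Γ₁ p) * Λb p := by noncomm_ring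
      _ = Λb p * (pdM 1 T₁ p - pdM 0 T₂ p + (T₁ p * T₂ p - T₂ p * T₁ p)) := by
          rw [h3]; noncomm_ring
  constructor
  · -- Γ-compatibility implies T-compatibility
    intro hM p hpU
    have hNW : ∀ q ∈ W,
        pdM 1 T₁ q - pdM 0 T₂ q + (T₁ q * T₂ q - T₂ q * T₁ q) = 0 := by
      intro q hq
      have h := key q hq
      rw [hM q hq, zero_mul] at h
      have hinv : IsUnit (Λb q).det := isUnit_iff_ne_zero.2 hq.2
      calc pdM 1 T₁ q - pdM 0 T₂ q + (T₁ q * T₂ q - T₂ q * T₁ q)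
          = (Λb q)⁻¹ * (Λb q * (pdM 1 T₁ q - pdM 0 T₂ q + (T₁ q * T₂ q - T₂ q * T₁ q))) := by
            rw [← Matrix.mul_assoc, Matrix.nonsing_inv_mul _ hinv, Matrix.one_mul]
        _ = 0 := by rw [← h, Matrix.mul_zero]
    ext i k
    set f : Pt → ℝ :=
      fun q => (pdM 1 T₁ q - pdM 0 T₂ q + (T₁ q * T₂ q - T₂ q * T₁ q)) i k with hfdef
    have hfcont : ContinuousOn f U := by
      have : f = fun q => (pd 1 (fun r => T₁ r i k) q - pd 0 (fun r => T₂ r i k) q)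
          + ((T₁ q * T₂ q) i k - (T₂ q * T₁ q) i k) := by
        funext q
        simp [hfdef, Matrix.add_apply, Matrix.sub_apply]
      rw [this]
      exact (((contDiffOn_pd hU (hT1 i k) 1).continuousOn.sub
          (contDiffOn_pd hU (hT2 i k) 0).continuousOn).add
        ((contOn_mul_entry hT1 hT2 i k).sub (contOn_mul_entry hT2 hT1 i k)))
    have h1 : Filter.Tendsto f (nhdsWithin p W) (𝓝 (f p)) :=
      (hfcont p hpU).mono hWU
    have h2 : Filter.Tendsto f (nhdsWithin p W) (𝓝 0) := by
      apply Filter.Tendsto.congr' _ tendsto_const_nhds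
      filter_upwards [self_mem_nhdsWithin] with q hq
      rw [hfdef]
      simp only [hNW q hq, Matrix.zero_apply]
    have hne : (nhdsWithin p W).NeBot :=
      mem_closure_iff_nhdsWithin_neBot.1 (hdense hpU)
    have := tendsto_nhds_unique h1 h2
    simpa [hfdef] using this
  · -- T-compatibility implies Γ-compatibility
    intro hN p hp
    have h := key p hp
    rw [hN p hp.1, Matrix.mul_zero] at h
    have hinv : IsUnit (Λb p).det := isUnit_iff_ne_zero.2 hp.2
    calc pdM 1 Γ₁ p - pdM 0 Γ₂ p + (Γ₁ p * Γ₂ p - Γ₂ p * Γ₁ p)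
        = (pdM 1 Γ₁ p - pdM 0 Γ₂ p + (Γ₁ p * Γ₂ p - Γ₂ p * Γ₁ p)) * Λb p * (Λb p)⁻¹ := by
          rw [Matrix.mul_nonsing_inv_cancel_right _ _ hinv]
      _ = 0 := by rw [h, Matrix.zero_mul]
end
end

section
/- Let Ī, Ī_Ω, Λ̄, T̄₁, T̄₂ : U → M_{n×n}(ℝ) be smooth maps on an open set U ⊆ ℝ² with Ī = Λ̄·Ī_Ω·Λ̄ᵀ and det Ī_Ω ≠ 0 everywhere, let Z := {p ∈ U : det Λ̄(p) = 0} have empty interior, and let Γ̄₁, Γ̄₂ : U ∖ Z → M_{n×n}(ℝ) be smooth maps satisfying Γ̄₁·Λ̄ − ∂_u Λ̄ = Λ̄·T̄₁ and Γ̄₂·Λ̄ − ∂_v Λ̄ = Λ̄·T̄₂ on U ∖ Z. Then: (1) Ī·Γ̄₁ᵀ + Γ̄₁·Ī = ∂_u Ī on U ∖ Z if and only if Ī_Ω·T̄₁ᵀ + T̄₁·Ī_Ω = ∂_u Ī_Ω on all of U; and (2) Ī·Γ̄₂ᵀ + Γ̄₂·Ī = ∂_v Ī on U ∖ Z if and only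 if Ī_Ω·T̄₂ᵀ + T̄₂·Ī_Ω = ∂_v Ī_Ω on all of U. -/
open Matrix Filter

noncomputable section

namespace MCaux

lemma pdM_congr {m n : ℕ} (j : Fin 2) {A B : Pt → Matrix (Fin m) (Fin n) ℝ} {p : Pt}
    {U : Set Pt} (hU : IsOpen U) (hp : p ∈ U) (h : ∀ q ∈ U, A q = B q) :
    pdM j A p = pdM j B p := by
  ext i k
  simp only [pdM, Matrix.of_apply, pd]
  congr 1
  apply Filter.EventuallyEq.fderiv_eq
  filter_upwards [hU.mem_nhds hp] with q hq
  rw [h q hq]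

lemma diffAt_mul_entry {m n k : ℕ} {A : Pt → Matrix (Fin m) (Fin n) ℝ}
    {B : Pt → Matrix (Fin n) (Fin k) ℝ} {p : Pt}
    (hA : ∀ i l, DifferentiableAt ℝ (fun q => A q i l) p)
    (hB : ∀ l r, DifferentiableAt ℝ (fun q => B q l r) p) (i : Fin m) (r : Fin k) :
    DifferentiableAt ℝ (fun q => (A q * B q) i r) p := by
  have : (fun q => (A q * B q) i r) = fun q => ∑ l, A q i l * B q l r := by
    funext q; rw [Matrix.mul_apply]
  rw [this]
  exact DifferentiableAt.fun_sum fun l _ => (hA i l).mul (hB l r)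

lemma pdM_mul {m n k : ℕ} (j : Fin 2) (A : Pt → Matrix (Fin m) (Fin n) ℝ)
    (B : Pt → Matrix (Fin n) (Fin k) ℝ) (p : Pt)
    (hA : ∀ i l, DifferentiableAt ℝ (fun q => A q i l) p)
    (hB : ∀ l r, DifferentiableAt ℝ (fun q => B q l r) p) :
    pdM j (fun q => A q * B q) p = pdM j A p * B p + A p * pdM j B p := by
  ext i r
  simp only [pdM, Matrix.of_apply, pd, Matrix.add_apply, Matrix.mul_apply]
  rw [fderiv_fun_sum (A := fun l q => A q i l * B q l r) fun l _ => (hA i l).mul (hB l r)]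
  simp only [ContinuousLinearMap.coe_sum', Finset.sum_apply]
  rw [← Finset.sum_add_distrib]
  refine Finset.sum_congr rfl fun l _ => ?_
  rw [fderiv_fun_mul (hA i l) (hB l r)]
  simp only [ContinuousLinearMap.add_apply, ContinuousLinearMap.smul_apply, smul_eq_mul]
  ring

lemma pdM_transpose {m n : ℕ} (j : Fin 2) (A : Pt → Matrix (Fin m) (Fin n) ℝ) (p : Pt) :
    pdM j (fun q => (A q)ᵀ) p = (pdM j A p)ᵀ := rfl

lemma key {n : ℕ} (L L' I I' T Γ : Matrix (Fin n) (Fin n) ℝ)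
    (h : Γ * L - L' = L * T) :
    (L * I * Lᵀ) * Γᵀ + Γ * (L * I * Lᵀ) - ((L' * I + L * I') * Lᵀ + (L * I) * L'ᵀ)
      = L * (I * Tᵀ + T * I - I') * Lᵀ := by
  have hGL : Γ * L = L' + L * T := by rw [← h]; abel
  have h1 : Γ * (L * I * Lᵀ) = (L' + L * T) * (I * Lᵀ) := by
    rw [← hGL]; noncomm_ring
  have h2 : (L * I * Lᵀ) * Γᵀ = (L * I) * (L' + L * T)ᵀ := by
    rw [← hGL, Matrix.transpose_mul]; noncomm_ring
  rw [h1, h2, Matrix.transpose_add, Matrix.transpose_mul]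
  noncomm_ring

lemma conj_eq_zero {n : ℕ} {L M : Matrix (Fin n) (Fin n) ℝ} (h : IsUnit L.det) :
    L * M * Lᵀ = 0 ↔ M = 0 := by
  constructor
  · intro h0
    have hT : IsUnit (Lᵀ).det := by rwa [Matrix.det_transpose]
    have : L⁻¹ * (L * M * Lᵀ) * (Lᵀ)⁻¹ = M := by
      have e : L⁻¹ * (L * M * Lᵀ) * (Lᵀ)⁻¹ = (L⁻¹ * L) * M * (Lᵀ * (Lᵀ)⁻¹) := by
        noncomm_ring
      rw [e, Matrix.nonsing_inv_mul _ h, Matrix.mul_nonsing_inv _ hT,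
        Matrix.one_mul, Matrix.mul_one]
    rw [← this, h0]
    simp
  · intro h0; simp [h0]

lemma pd_continuousOn {U : Set Pt} (hU : IsOpen U) {f : Pt → ℝ}
    (hf : ContDiffOn ℝ (⊤ : ℕ∞) f U) (j : Fin 2) :
    ContinuousOn (fun p => pd j f p) U :=
  (hf.continuousOn_fderiv_of_isOpen hU (by simp)).clm_apply continuousOn_const

lemma mem_closure_diff {U : Set Pt} {Z : Set Pt}
    (hint : interior {p ∈ U | p ∈ Z} = ∅) {p : Pt} (hpU : p ∈ U) (hUo : IsOpen U) :
    p ∈ closure (U \ Z) := by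
  by_contra hc
  rw [mem_closure_iff] at hc
  push_neg at hc
  obtain ⟨W, hWo, hpW, hWe⟩ := hc
  have hsub : W ∩ U ⊆ {q ∈ U | q ∈ Z} := by
    rintro q ⟨hqW, hqU⟩
    refine ⟨hqU, ?_⟩
    by_contra hz
    exact (Set.eq_empty_iff_forall_notMem.mp hWe q) ⟨hqW, hqU, hz⟩
  have : p ∈ interior {q ∈ U | q ∈ Z} :=
    mem_interior.mpr ⟨W ∩ U, hsub, hWo.inter hUo, hpW, hpU⟩
  rw [hint] at this
  exact this

lemma aux {n : ℕ} {U : Set Pt} (hU : IsOpen U)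
    (Ib IOb Λb T Γ : Pt → Matrix (Fin n) (Fin n) ℝ) (j : Fin 2)
    (hIO : SmoothMatOn U IOb) (hΛ : SmoothMatOn U Λb) (hT : SmoothMatOn U T)
    (hdec : ∀ p ∈ U, Ib p = Λb p * IOb p * (Λb p)ᵀ)
    (hint : interior {p ∈ U | (Λb p).det = 0} = ∅)
    (hrel : ∀ p ∈ U \ {p | (Λb p).det = 0}, Γ p * Λb p - pdM j Λb p = Λb p * T p) :
    (∀ p ∈ U \ {p | (Λb p).det = 0}, Ib p * (Γ p)ᵀ + Γ p * Ib p = pdM j Ib p)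
      ↔ (∀ p ∈ U, IOb p * (T p)ᵀ + T p * IOb p = pdM j IOb p) := by
  set Z : Set Pt := {p | (Λb p).det = 0} with hZ
  set F : Pt → Matrix (Fin n) (Fin n) ℝ :=
    fun p => IOb p * (T p)ᵀ + T p * IOb p - pdM j IOb p with hF
  have hdΛ : ∀ p ∈ U, ∀ i l, DifferentiableAt ℝ (fun q => Λb q i l) p := fun p hp i l =>
    ((hΛ i l).contDiffAt (hU.mem_nhds hp)).differentiableAt (by simp)
  have hdIO : ∀ p ∈ U, ∀ i l, DifferentiableAt ℝ (fun q => IOb q i l) p := fun p hp i l =>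
    ((hIO i l).contDiffAt (hU.mem_nhds hp)).differentiableAt (by simp)
  have hpdI : ∀ p ∈ U, pdM j Ib p =
      (pdM j Λb p * IOb p + Λb p * pdM j IOb p) * (Λb p)ᵀ
        + (Λb p * IOb p) * (pdM j Λb p)ᵀ := by
    intro p hp
    have h1 : pdM j Ib p = pdM j (fun q => (Λb q * IOb q) * (Λb q)ᵀ) p :=
      pdM_congr j hU hp (fun q hq => by rw [hdec q hq])
    rw [h1, pdM_mul j (fun q => Λb q * IOb q) (fun q => (Λb q)ᵀ) p
        (diffAt_mul_entry (hdΛ p hp) (hdIO p hp)) (fun i l => hdΛ p hp l i),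
      pdM_mul j Λb IOb p (hdΛ p hp) (hdIO p hp), pdM_transpose]
  have hident : ∀ p ∈ U \ Z,
      Ib p * (Γ p)ᵀ + Γ p * Ib p - pdM j Ib p = Λb p * F p * (Λb p)ᵀ := by
    intro p hp
    rw [hdec p hp.1, hpdI p hp.1]
    exact key (Λb p) (pdM j Λb p) (IOb p) (pdM j IOb p) (T p) (Γ p) (hrel p hp)
  have hunit : ∀ p ∈ U \ Z, IsUnit (Λb p).det := fun p hp =>
    isUnit_iff_ne_zero.mpr hp.2
  constructor
  · intro h p hp
    have hFzero : ∀ q ∈ U \ Z, F q = 0 := fun q hq =>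
      (conj_eq_zero (hunit q hq)).mp (by rw [← hident q hq]; exact sub_eq_zero_of_eq (h q hq))
    have hcont : ∀ i k, ContinuousOn (fun q => F q i k) U := by
      intro i k
      have e : (fun q => F q i k) = fun q =>
          ((∑ l, IOb q i l * T q k l) + ∑ l, T q i l * IOb q l k)
            - pd j (fun q => IOb q i k) q := by
        funext q
        simp [hF, Matrix.mul_apply, Matrix.sub_apply, Matrix.add_apply, pdM,
          Matrix.transpose_apply]
      rw [e]
      exact (((continuousOn_finset_sum _ fun l _ =>
          ((hIO i l).continuousOn.mul ((hT k l).continuousOn))).add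
        (continuousOn_finset_sum _ fun l _ =>
          ((hT i l).continuousOn.mul ((hIO l k).continuousOn)))).sub
        (pd_continuousOn hU (hIO i k) j))
    have hcl : p ∈ closure (U \ Z) := mem_closure_diff hint hp hU
    have hne : (nhdsWithin p (U \ Z)).NeBot := mem_closure_iff_nhdsWithin_neBot.mp hcl
    rw [← sub_eq_zero]
    show F p = 0
    ext i k
    have h1 : Tendsto (fun q => F q i k) (nhdsWithin p (U \ Z)) (nhds (F p i k)) :=
      (((hcont i k).continuousAt (hU.mem_nhds hp)).tendsto).mono_left nhdsWithin_le_nhds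
    have h2 : Tendsto (fun q => F q i k) (nhdsWithin p (U \ Z)) (nhds 0) := by
      apply Filter.Tendsto.congr' _ tendsto_const_nhds
      filter_upwards [self_mem_nhdsWithin] with q hq
      rw [hFzero q hq]; simp
    simpa using tendsto_nhds_unique h1 h2
  · intro h p hp
    have hF0 : F p = 0 := sub_eq_zero_of_eq (h p hp.1)
    have := hident p hp
    rw [hF0] at this
    simp only [Matrix.mul_zero, Matrix.zero_mul] at this
    exact sub_eq_zero.mp this

end MCaux

/-- equivalence of the metric compatibility relations for `Ī, Γ̄ᵢ` and
`Ī_Ω, T̄ᵢ`. -/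
theorem metric_compat_transfer
    (n : ℕ) (U : Set Pt) (hU : IsOpen U)
    (Ib IOb Λb T₁ T₂ : Pt → Matrix (Fin n) (Fin n) ℝ)
    (hI : SmoothMatOn U Ib) (hIO : SmoothMatOn U IOb) (hΛ : SmoothMatOn U Λb)
    (hT1 : SmoothMatOn U T₁) (hT2 : SmoothMatOn U T₂)
    (hdec : ∀ p ∈ U, Ib p = Λb p * IOb p * (Λb p)ᵀ)
    (hIOdet : ∀ p ∈ U, (IOb p).det ≠ 0)
    (hint : interior {p ∈ U | (Λb p).det = 0} = ∅)
    (Γ₁ Γ₂ : Pt → Matrix (Fin n) (Fin n) ℝ)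
    (hΓ1 : SmoothMatOn (U \ {p | (Λb p).det = 0}) Γ₁)
    (hΓ2 : SmoothMatOn (U \ {p | (Λb p).det = 0}) Γ₂)
    (hrel1 : ∀ p ∈ U \ {p | (Λb p).det = 0}, Γ₁ p * Λb p - pdM 0 Λb p = Λb p * T₁ p)
    (hrel2 : ∀ p ∈ U \ {p | (Λb p).det = 0}, Γ₂ p * Λb p - pdM 1 Λb p = Λb p * T₂ p) :
    ((∀ p ∈ U \ {p | (Λb p).det = 0}, Ib p * (Γ₁ p)ᵀ + Γ₁ p * Ib p = pdM 0 Ib p)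
      ↔ (∀ p ∈ U, IOb p * (T₁ p)ᵀ + T₁ p * IOb p = pdM 0 IOb p)) ∧
    ((∀ p ∈ U \ {p | (Λb p).det = 0}, Ib p * (Γ₂ p)ᵀ + Γ₂ p * Ib p = pdM 1 Ib p)
      ↔ (∀ p ∈ U, IOb p * (T₂ p)ᵀ + T₂ p * IOb p = pdM 1 IOb p)) :=
  ⟨MCaux.aux hU Ib IOb Λb T₁ Γ₁ 0 hIO hΛ hT1 hdec hint hrel1,
   MCaux.aux hU Ib IOb Λb T₂ Γ₂ 1 hIO hΛ hT2 hdec hint hrel2⟩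
end
end
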